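/- Let $n \geq 1$, $s \in (0,1)$, $\lambda > 0$, $x_0 \in \mathbf{R}^n$ and $0 < \rho < |x_0|$. Define $x_{\rho, x_0} = x_0 + \frac{\rho^2 (x - x_0)}{|x-x_0|^2}$ for $x \neq x_0$. Then for all $x$ with $\rho < |x - x_0| < |x_0|$ (so that $x \neq 0$ and $x_{\rho,x_0} \neq 0$), one has $\left(\frac{\rho}{|x - x_0|}\right)^{4s} \frac{1}{|x_{\rho,x_0}|^{2s}} \leq \frac{1}{|x|^{2s}}$. -/

import Mathlib

theorem stmt_1 (n : ℕ) (hn : 1 ≤ n) (s : ℝ) (hs : 0 < s) (hs1 : s < 1)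
    (lam : ℝ) (hlam : 0 < lam)
    (x₀ : EuclideanSpace ℝ (Fin n)) (ρ : ℝ) (hρ : 0 < ρ) (hρlt : ρ < ‖x₀‖)
    (x : EuclideanSpace ℝ (Fin n))
    (h₁ : ρ < ‖x - x₀‖) (h₂ : ‖x - x₀‖ < ‖x₀‖) :
    (ρ / ‖x - x₀‖) ^ (4 * s) *
        (1 / ‖x₀ + (ρ ^ 2 / ‖x - x₀‖ ^ 2) • (x - x₀)‖ ^ (2 * s)) ≤
      1 / ‖x‖ ^ (2 * s) := by
  set r := ‖x - x₀‖ with hr_def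
  have hr : 0 < r := hρ.trans h₁
  set t : ℝ := ρ ^ 2 / r ^ 2 with ht_def
  have hrr : ρ ^ 2 < r ^ 2 := by nlinarith
  have ht0 : 0 < t := by positivity
  have ht1 : t < 1 := (div_lt_one (by positivity)).2 hrr
  have hx : 0 < ‖x‖ := by
    have h := norm_sub_norm_le x₀ x
    rw [norm_sub_rev x₀ x] at h
    linarith
  set a : ℝ := inner ℝ x₀ (x - x₀) with ha_def
  have hx' : x₀ + (x - x₀) = x := by abel
  have hxsq : ‖x‖ ^ 2 = ‖x₀‖ ^ 2 + 2 * a + r ^ 2 := by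
    rw [← hx', norm_add_sq_real]
  set y := x₀ + t • (x - x₀) with hy_def
  have hysq : ‖y‖ ^ 2 = ‖x₀‖ ^ 2 + 2 * (t * a) + t ^ 2 * r ^ 2 := by
    rw [hy_def, norm_add_sq_real, real_inner_smul_right, norm_smul,
      Real.norm_eq_abs, abs_of_pos ht0]
    ring
  have ha : -(‖x₀‖ * r) ≤ a := by
    have := abs_real_inner_le_norm x₀ (x - x₀)
    have h2 := neg_abs_le a
    linarith
  have key : (t * ‖x‖) ^ 2 ≤ ‖y‖ ^ 2 := by
    have hX : (0:ℝ) ≤ ‖x₀‖ := norm_nonneg x₀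
    have h1 : 0 ≤ (1 - t) * t * (a + ‖x₀‖ * r) :=
      mul_nonneg (mul_nonneg (by linarith) ht0.le) (by linarith)
    have h2 : 0 ≤ (1 - t) * ‖x₀‖ * (t * (‖x₀‖ - r)) :=
      mul_nonneg (mul_nonneg (by linarith) hX)
        (mul_nonneg ht0.le (by linarith))
    have h3 : 0 ≤ (1 - t) * ‖x₀‖ * (‖x₀‖ - r * t) :=
      mul_nonneg (mul_nonneg (by linarith) hX)
        (by nlinarith)
    nlinarith [h1, h2, h3]
  have keyle : t * ‖x‖ ≤ ‖y‖ := by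
    nlinarith [norm_nonneg y, mul_pos ht0 hx]
  have hy : 0 < ‖y‖ := lt_of_lt_of_le (mul_pos ht0 hx) keyle
  have hρr : 0 < ρ / r := by positivity
  have hpow : (ρ / r) ^ (4 * s) = t ^ (2 * s) := by
    have : (4 : ℝ) * s = 2 * (2 * s) := by ring
    rw [this, Real.rpow_mul hρr.le]
    congr 1
    rw [show ((2:ℝ)) = ((2:ℕ):ℝ) by norm_num, Real.rpow_natCast, div_pow,
      ht_def]
  rw [hpow, mul_one_div, div_le_div_iff₀ (by positivity) (by positivity),
    one_mul, ← Real.mul_rpow ht0.le (norm_nonneg x)]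
  exact Real.rpow_le_rpow (by positivity) keyle (by positivity)
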